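/- Let N ≥ 2 and let d ∈ 𝔽₂^N be a rule vector, with LHCA characteristic polynomial Δ_{N-1}, characteristic subpolynomial Δ_{N-2} (cells 0 through N-2), and characteristic subpolynomial Δ_{1,N-1} (cells 1 through N-1). Then both y = Δ_{N-2} and y = Δ_{1,N-1} satisfy the quadratic congruence y² + (X² + X)·Δ'_{N-1}·y + 1 ≡ 0 (mod Δ_{N-1}) in 𝔽₂[X], where Δ'_{N-1} denotes the formal derivative of Δ_{N-1}. -/
import Mathlib


open Polynomial

/-- Transition matrix of a null-boundary linear hybrid CA over 𝔽₂ with rule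
vector `d`: tridiagonal, diagonal entries `d i`, sub/super-diagonal entries 1. -/
def lhcaMatrix (N : ℕ) (d : Fin N → ZMod 2) : Matrix (Fin N) (Fin N) (ZMod 2) :=
  Matrix.of fun i j =>
    if i = j then d i
    else if (i : ℕ) + 1 = (j : ℕ) ∨ (j : ℕ) + 1 = (i : ℕ) then 1 else 0

/-- Characteristic polynomial of the LHCA transition matrix. -/
noncomputable def lhcaCharPoly (N : ℕ) (d : Fin N → ZMod 2) : Polynomial (ZMod 2) :=
  (lhcaMatrix N d).charpoly

noncomputable def aseq (d : ℕ → ZMod 2) : ℕ → Polynomial (ZMod 2)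
  | 0 => 0
  | 1 => 1
  | (n+2) => (X + C (d n)) * aseq d (n+1) + aseq d n

lemma aseq_zero (d : ℕ → ZMod 2) : aseq d 0 = 0 := rfl
lemma aseq_one (d : ℕ → ZMod 2) : aseq d 1 = 1 := rfl
lemma aseq_two (d : ℕ → ZMod 2) : aseq d 2 = X + C (d 0) := by
  show (X + C (d 0)) * aseq d 1 + aseq d 0 = _
  rw [aseq_one, aseq_zero]; ring
lemma aseq_succ (d : ℕ → ZMod 2) (n : ℕ) :
    aseq d (n+2) = (X + C (d n)) * aseq d (n+1) + aseq d n := rfl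

/-- `aseq d n` only depends on `d i` for `i + 2 ≤ n`. -/
lemma aseq_congr : ∀ (n : ℕ) (f g : ℕ → ZMod 2), (∀ i, i + 2 ≤ n → f i = g i) →
    aseq f n = aseq g n
  | 0, f, g, _ => rfl
  | 1, f, g, _ => rfl
  | (n+2), f, g, h => by
    rw [aseq_succ, aseq_succ, h n (by omega),
      aseq_congr (n+1) f g (fun i hi => h i (by omega)),
      aseq_congr n f g (fun i hi => h i (by omega))]

/-- front recurrence -/
lemma aseq_front : ∀ (n : ℕ) (g : ℕ → ZMod 2),
    aseq g (n+2) = (X + C (g 0)) * aseq (fun i => g (i+1)) (n+1)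
      + aseq (fun i => g (i+2)) n
  | 0, g => by simp [aseq_succ, aseq_one, aseq_zero]
  | 1, g => by
    rw [aseq_succ, aseq_two, aseq_two, aseq_one,
      show aseq (fun i => g (i+2)) 1 = 1 from rfl]
    ring
  | (n+2), g => by
    rw [aseq_succ, aseq_front (n+1) g, aseq_front n g,
      aseq_succ (fun i => g (i+1)) (n+1), aseq_succ (fun i => g (i+2)) n]
    ring

/-- reversal invariance -/
lemma aseq_rev : ∀ (n : ℕ) (g : ℕ → ZMod 2),
    aseq (fun j => g (n - 1 - j)) (n+1) = aseq g (n+1)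
  | 0, g => rfl
  | 1, g => by rw [aseq_two, aseq_two]
  | (n+2), g => by
    rw [show n+2+1 = (n+1)+2 from rfl, aseq_succ, aseq_front (n+1) g]
    have h1 : aseq (fun j => g (n + 2 - 1 - j)) (n+2)
        = aseq (fun i => g (i+1)) (n+2) := by
      rw [← aseq_rev (n+1) (fun i => g (i+1))]
      exact aseq_congr _ _ _ (fun i hi => by congr 1; omega)
    have h2 : aseq (fun j => g (n + 2 - 1 - j)) (n+1)
        = aseq (fun i => g (i+2)) (n+1) := by
      rw [← aseq_rev n (fun i => g (i+2))]
      exact aseq_congr _ _ _ (fun i hi => by congr 1; omega)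
    rw [h1, h2]
    norm_num

lemma h2poly : (2 : Polynomial (ZMod 2)) = 0 := by
  have : ((2:ℕ) : Polynomial (ZMod 2)) = 0 := CharP.cast_eq_zero _ 2
  exact_mod_cast this

lemma hCidem (a : ZMod 2) : C a * C a = C a := by
  rw [← C_mul]
  congr 1
  revert a; decide

/-- the "u" identity: cross products of prefix and suffix continuants. -/
lemma aseq_u (d : ℕ → ZMod 2) (N : ℕ) :
    ∀ k m, k + m = N →
      aseq d (m+1) * aseq (fun j => d (N-1-j)) (k+1)
        + aseq d m * aseq (fun j => d (N-1-j)) k = aseq d (N+1) := by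
  intro k
  induction k with
  | zero =>
    intro m hm
    subst hm
    simp [aseq_one, aseq_zero]
  | succ k ih =>
    intro m hm
    have ihm := ih (m+1) (by omega)
    have hb : aseq (fun j => d (N-1-j)) (k+2)
        = (X + C (d m)) * aseq (fun j => d (N-1-j)) (k+1)
          + aseq (fun j => d (N-1-j)) k := by
      rw [aseq_succ]
      simp only [show N-1-k = m from by omega]
    have ha : aseq d (m+2) = (X + C (d m)) * aseq d (m+1) + aseq d m :=
      aseq_succ d m
    linear_combination ihm + aseq d (m+1) * hb
      - aseq (fun j => d (N-1-j)) (k+1) * ha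

/-- the continuant determinant ("E") identity. -/
lemma aseq_e (d : ℕ → ZMod 2) :
    ∀ n, aseq d (n+2) * aseq (fun i => d (i+1)) n
        + aseq d (n+1) * aseq (fun i => d (i+1)) (n+1) = 1 := by
  intro n
  induction n with
  | zero => simp [aseq_one, aseq_zero]
  | succ n ih =>
    have ha : aseq d (n+3) = (X + C (d (n+1))) * aseq d (n+2) + aseq d (n+1) :=
      aseq_succ d (n+1)
    have hb : aseq (fun i => d (i+1)) (n+2)
        = (X + C (d (n+1))) * aseq (fun i => d (i+1)) (n+1)
          + aseq (fun i => d (i+1)) n := aseq_succ _ n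
    linear_combination ih + aseq (fun i => d (i+1)) (n+1) * ha
      + aseq d (n+2) * hb
      + (X + C (d (n+1))) * aseq d (n+2) * aseq (fun i => d (i+1)) (n+1) * h2poly

/-- derivative partial-sum identity. -/
lemma aseq_ds (d : ℕ → ZMod 2) (N : ℕ) :
    ∀ k m, k + m = N →
      ∑ j ∈ Finset.range k, aseq d (N-j) * aseq (fun j => d (N-1-j)) (j+1)
        = aseq d (m+1) * derivative (aseq (fun j => d (N-1-j)) (k+1))
          + aseq d m * derivative (aseq (fun j => d (N-1-j)) k) := by
  intro k
  induction k with
  | zero =>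
    intro m hm
    simp [aseq_one, aseq_zero]
  | succ k ih =>
    intro m hm
    have ihm := ih (m+1) (by omega)
    have hb : aseq (fun j => d (N-1-j)) (k+2)
        = (X + C (d m)) * aseq (fun j => d (N-1-j)) (k+1)
          + aseq (fun j => d (N-1-j)) k := by
      rw [aseq_succ]
      simp only [show N-1-k = m from by omega]
    have hb' := congrArg derivative hb
    rw [derivative_add, derivative_mul, derivative_add, derivative_X,
      derivative_C, add_zero, one_mul] at hb'
    have ha : aseq d (m+2) = (X + C (d m)) * aseq d (m+1) + aseq d m :=
      aseq_succ d m
    rw [Finset.sum_range_succ, show N - k = m + 1 by omega]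
    linear_combination ihm - aseq d (m+1) * hb'
      + derivative (aseq (fun j => d (N-1-j)) (k+1)) * ha

/-- telescoped main sum identity. -/
lemma aseq_tel (d : ℕ → ZMod 2) (N : ℕ) :
    ∀ k m, k + m = N →
      (X^2 + X) * ∑ j ∈ Finset.range k,
          aseq d (N-j) * aseq (fun j => d (N-1-j)) (j+1)
        + aseq d N
        + aseq d m * (aseq (fun j => d (N-1-j)) (k+1)
            + aseq (fun j => d (N-1-j)) k)
        + aseq d (m+1) * aseq (fun j => d (N-1-j)) k
      = (∑ j ∈ Finset.range k, (X + C (d (N-1-j)) + 1)) * aseq d (N+1) := by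
  intro k
  induction k with
  | zero =>
    intro m hm
    obtain rfl : m = N := by omega
    simp only [Finset.range_zero, Finset.sum_empty, mul_zero, zero_add,
      aseq_one, aseq_zero, add_zero, mul_one, mul_zero, zero_mul]
    linear_combination aseq d m * h2poly
  | succ k ih =>
    intro m hm
    have ihm := ih (m+1) (by omega)
    have hb : aseq (fun j => d (N-1-j)) (k+2)
        = (X + C (d m)) * aseq (fun j => d (N-1-j)) (k+1)
          + aseq (fun j => d (N-1-j)) k := by
      rw [aseq_succ]
      simp only [show N-1-k = m from by omega]
    have ha : aseq d (m+2) = (X + C (d m)) * aseq d (m+1) + aseq d m :=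
      aseq_succ d m
    have hu : aseq d (m+2) * aseq (fun j => d (N-1-j)) (k+1)
        + aseq d (m+1) * aseq (fun j => d (N-1-j)) k = aseq d (N+1) :=
      aseq_u d N k (m+1) (by omega)
    have hC : C (d m) * C (d m) = C (d m) := hCidem (d m)
    rw [Finset.sum_range_succ, Finset.sum_range_succ,
      show N - k = m + 1 by omega, show N - 1 - k = m by omega]
    set B0 := aseq (fun j => d (N-1-j)) k with hB0
    set B1 := aseq (fun j => d (N-1-j)) (k+1) with hB1
    set B2 := aseq (fun j => d (N-1-j)) (k+2) with hB2
    set A0 := aseq d m with hA0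
    set A1 := aseq d (m+1) with hA1
    set A2 := aseq d (m+2) with hA2
    linear_combination ihm + (1 + C (d m) + X) * hu
      + (-B1 - B0 - C (d m) * B1 - X * B1) * ha
      + A0 * hb + (-(A1*B1)) * hC
      + (-(A1*B0) - C (d m)*A1*B1 - C (d m)*A1*B0 - X*A1*B0 - X*C (d m)*A1*B1) * h2poly

/-- Main identity. -/
lemma aseq_main (d : ℕ → ZMod 2) (N : ℕ) :
    (X^2 + X) * derivative (aseq d (N+1)) + aseq d N
        + aseq (fun j => d (N-1-j)) N
      = (∑ j ∈ Finset.range N, (X + C (d (N-1-j)) + 1)) * aseq d (N+1) := by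
  have htel := aseq_tel d N N 0 (by omega)
  have hds := aseq_ds d N N 0 (by omega)
  rw [aseq_rev N d] at hds
  rw [hds] at htel
  simp only [aseq_zero, aseq_one, zero_mul, mul_zero, add_zero, zero_add,
    one_mul, derivative_zero] at htel
  linear_combination htel

lemma negp (p : Polynomial (ZMod 2)) : -p = p := by linear_combination (-p) * h2poly

lemma charm_apply (n : ℕ) (d : Fin n → ZMod 2) (i j : Fin n) :
    Matrix.charmatrix (lhcaMatrix n d) i j =
      if i = j then X + C (d i)
      else if (i : ℕ) + 1 = (j : ℕ) ∨ (j : ℕ) + 1 = (i : ℕ) then 1 else 0 := by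
  rcases eq_or_ne i j with rfl | h
  · rw [Matrix.charmatrix_apply_eq, if_pos rfl]
    have h1 : lhcaMatrix n d i i = d i := by simp [lhcaMatrix]
    rw [h1, sub_eq_add_neg, negp]
  · rw [Matrix.charmatrix_apply_ne _ _ _ h, if_neg h]
    by_cases hadj : (i : ℕ) + 1 = (j : ℕ) ∨ (j : ℕ) + 1 = (i : ℕ)
    · rw [if_pos hadj]
      have h1 : lhcaMatrix n d i j = 1 := by simp [lhcaMatrix, h, hadj]
      rw [h1, map_one, negp]
    · rw [if_neg hadj]
      have h1 : lhcaMatrix n d i j = 0 := by simp [lhcaMatrix, h, hadj]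
      rw [h1, map_zero, neg_zero]

lemma lhca0 (d : Fin 0 → ZMod 2) : lhcaCharPoly 0 d = 1 := by
  rw [lhcaCharPoly, Matrix.charpoly, Matrix.det_fin_zero]

lemma lhca1 (d : Fin 1 → ZMod 2) : lhcaCharPoly 1 d = X + C (d 0) := by
  rw [lhcaCharPoly, Matrix.charpoly, Matrix.det_fin_one, charm_apply, if_pos rfl]

lemma lhca_rec (N : ℕ) (d : Fin (N+2) → ZMod 2) :
    lhcaCharPoly (N+2) d
      = (X + C (d 0)) * lhcaCharPoly (N+1) (fun i => d i.succ)
        + lhcaCharPoly N (fun i => d ⟨(i:ℕ)+2, by omega⟩) := by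
  have hM1 : (Matrix.charmatrix (lhcaMatrix (N+2) d)).submatrix Fin.succ Fin.succ
      = Matrix.charmatrix (lhcaMatrix (N+1) (fun i => d i.succ)) := by
    funext i j
    rw [Matrix.submatrix_apply, charm_apply, charm_apply]
    by_cases h : i = j
    · subst h; simp
    · rw [if_neg (by simpa [Fin.succ_inj] using h), if_neg h]
      have hc : ((↑(Fin.succ i) + 1 = (↑(Fin.succ j) : ℕ)) ∨ ((↑(Fin.succ j) : ℕ) + 1 = ↑(Fin.succ i)))
          ↔ (((i:ℕ) + 1 = ↑j) ∨ ((j:ℕ) + 1 = ↑i)) := by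
        simp only [Fin.val_succ]; omega
      simp only [hc]
  have hM2 : ((Matrix.charmatrix (lhcaMatrix (N+2) d)).submatrix Fin.succ
        ((1 : Fin (N+2)).succAbove)).submatrix Fin.succ Fin.succ
      = Matrix.charmatrix (lhcaMatrix N (fun i => d ⟨(i:ℕ)+2, by omega⟩)) := by
    funext i j
    simp only [Matrix.submatrix_apply, Fin.one_succAbove_succ]
    rw [charm_apply, charm_apply]
    by_cases h : i = j
    · subst h
      simp only [if_pos rfl]
      rfl
    · rw [if_neg (by simpa [Fin.succ_inj] using h), if_neg h]
      have hc : ((↑(i.succ.succ) + 1 = (↑(j.succ.succ) : ℕ)) ∨ ((↑(j.succ.succ) : ℕ) + 1 = ↑(i.succ.succ)))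
          ↔ (((i:ℕ) + 1 = ↑j) ∨ ((j:ℕ) + 1 = ↑i)) := by
        simp only [Fin.val_succ]; omega
      simp only [hc]
  rw [lhcaCharPoly, Matrix.charpoly, Matrix.det_succ_row_zero,
    Fin.sum_univ_succ, Fin.sum_univ_succ]
  have hzero : ∀ i : Fin N, (lhcaMatrix (N + 2) d).charmatrix 0 i.succ.succ = 0 := by
    intro i
    rw [charm_apply, if_neg, if_neg]
    · simp only [Fin.val_succ, Fin.val_zero]
      omega
    · intro hcon
      have := congrArg Fin.val hcon
      simp only [Fin.val_succ, Fin.val_zero] at this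
      omega
  rw [Finset.sum_eq_zero (fun i _ => by rw [hzero i]; ring)]
  have e00 : (lhcaMatrix (N+2) d).charmatrix 0 0 = X + C (d 0) := by
    rw [charm_apply, if_pos rfl]
  have e01 : (lhcaMatrix (N+2) d).charmatrix 0 (Fin.succ 0) = 1 := by
    rw [charm_apply, if_neg, if_pos]
    · left; simp
    · intro hcon
      have := congrArg Fin.val hcon
      simp only [Fin.val_succ, Fin.val_zero] at this
      omega
  rw [e00, e01, Fin.succAbove_zero, hM1, Fin.succ_zero_eq_one]
  have hdet1 : ((lhcaMatrix (N + 2) d).charmatrix.submatrix Fin.succ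
      (Fin.succAbove 1)).det
      = - lhcaCharPoly N (fun i => d ⟨(i:ℕ)+2, by omega⟩) := by
    rw [Matrix.det_succ_column_zero, Fin.sum_univ_succ]
    have hz2 : ∀ i : Fin N, ((lhcaMatrix (N + 2) d).charmatrix.submatrix Fin.succ
        (Fin.succAbove 1)) i.succ 0 = 0 := by
      intro i
      rw [Matrix.submatrix_apply, Fin.one_succAbove_zero, charm_apply, if_neg, if_neg]
      · simp only [Fin.val_succ, Fin.val_zero]
        omega
      · intro hcon
        have := congrArg Fin.val hcon
        simp only [Fin.val_succ, Fin.val_zero] at this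
        omega
    rw [Finset.sum_eq_zero (fun i _ => by rw [hz2 i]; ring)]
    have e10 : ((lhcaMatrix (N + 2) d).charmatrix.submatrix Fin.succ
        (Fin.succAbove 1)) 0 0 = 1 := by
      rw [Matrix.submatrix_apply, Fin.one_succAbove_zero, charm_apply, if_neg, if_pos]
      · right; simp
      · intro hcon
        have := congrArg Fin.val hcon
        simp only [Fin.val_succ, Fin.val_zero] at this
        omega
    rw [e10, Fin.succAbove_zero, hM2]
    show (-1)^((0:Fin (N+1)):ℕ) * 1 * lhcaCharPoly N (fun i => d ⟨(i:ℕ)+2, by omega⟩) + 0 = _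
    simp only [Fin.val_zero, pow_zero]
    rw [negp]
    ring
  rw [hdet1]
  show (-1)^((0:Fin (N+2)):ℕ) * (X + C (d 0)) * lhcaCharPoly (N+1) (fun i => d i.succ)
      + ((-1)^((1:Fin (N+2)):ℕ) * 1 *
        (- lhcaCharPoly N (fun i => d ⟨(i:ℕ)+2, by omega⟩)) + 0) = _
  simp only [Fin.val_zero, Fin.val_one, pow_zero, pow_one]
  ring

lemma lhca_eq_aseq : ∀ (N : ℕ) (d : Fin N → ZMod 2),
    lhcaCharPoly N d = aseq (fun i => if h : i < N then d ⟨i,h⟩ else 0) (N+1)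
  | 0, d => by rw [lhca0]; rfl
  | 1, d => by
    rw [lhca1, aseq_two]
    simp
  | (N+2), d => by
    rw [lhca_rec, lhca_eq_aseq (N+1) _, lhca_eq_aseq N _,
      aseq_front (N+1) (fun i => if h : i < N+2 then d ⟨i,h⟩ else 0)]
    have hD0 : (if h : (0:ℕ) < N+2 then d ⟨0,h⟩ else 0) = d 0 :=
      dif_pos (by omega)
    have hc1 : aseq (fun i => if h : i < N+1 then d (Fin.succ ⟨i,h⟩) else 0) (N+2)
        = aseq (fun i => if h : i+1 < N+2 then d ⟨i+1,h⟩ else 0) (N+2) :=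
      aseq_congr _ _ _ (fun i hi => by
        rw [dif_pos (show i < N+1 by omega), dif_pos (show i+1 < N+2 by omega)]
        rfl)
    have hc2 : aseq (fun i => if h : i < N then d ⟨i+2, by omega⟩ else 0) (N+1)
        = aseq (fun i => if h : i+2 < N+2 then d ⟨i+2,h⟩ else 0) (N+1) :=
      aseq_congr _ _ _ (fun i hi => by
        rw [dif_pos (show i < N by omega), dif_pos (show i+2 < N+2 by omega)])
    rw [hc1, hc2, hD0]

set_option maxHeartbeats 1000000 in
/-- HCA quadratic congruence theorem (Cattell–Muzio): both the characteristic
subpolynomial `Δ_{N-2}` (cells `0` through `N-2`) and the characteristic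
subpolynomial `Δ_{1,N-1}` (cells `1` through `N-1`) are solutions `y` of the
congruence `y² + (X² + X)·Δ'_{N-1}·y + 1 ≡ 0 (mod Δ_{N-1})` in 𝔽₂[X]. -/
theorem lhca_quadratic_congruence (N : ℕ) (hN : 2 ≤ N) (d : Fin N → ZMod 2) :
    (lhcaCharPoly N d ∣
      (lhcaCharPoly (N - 1) (fun i => d (Fin.castLE (by omega) i))) ^ 2 +
      (X ^ 2 + X) * derivative (lhcaCharPoly N d) *
        (lhcaCharPoly (N - 1) (fun i => d (Fin.castLE (by omega) i))) + 1) ∧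
    (lhcaCharPoly N d ∣
      (lhcaCharPoly (N - 1)
          (fun i => d ⟨(i : ℕ) + 1, by have := i.isLt; omega⟩)) ^ 2 +
      (X ^ 2 + X) * derivative (lhcaCharPoly N d) *
        (lhcaCharPoly (N - 1)
          (fun i => d ⟨(i : ℕ) + 1, by have := i.isLt; omega⟩)) + 1) := by
  obtain ⟨M, rfl⟩ : ∃ M, N = M + 2 := ⟨N - 2, by omega⟩
  simp only [lhca_eq_aseq, show M+2-1 = M+1 from rfl]
  set D : ℕ → ZMod 2 := fun i => if h : i < M+2 then d ⟨i,h⟩ else 0 with hD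
  have e1 : aseq (fun i => if h : i < M+1 then
        d (Fin.castLE (by omega) (⟨i,h⟩ : Fin (M+1))) else 0) (M+1+1)
      = aseq D (M+2) :=
    aseq_congr _ _ _ (fun i hi => by
      rw [dif_pos (show i < M+1 by omega)]
      show _ = if h : i < M+2 then d ⟨i,h⟩ else 0
      rw [dif_pos (show i < M+2 by omega)]
      rfl)
  have e2 : aseq (fun i => if h : i < M+1 then
        d (⟨i+1, by omega⟩ : Fin (M+2)) else 0) (M+1+1)
      = aseq (fun i => D (i+1)) (M+2) :=
    aseq_congr _ _ _ (fun i hi => by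
      rw [dif_pos (show i < M+1 by omega)]
      show _ = if h : i+1 < M+2 then d ⟨i+1,h⟩ else 0
      rw [dif_pos (show i+1 < M+2 by omega)])
  rw [e1, e2]
  have hrev : aseq (fun j => D (M+2-1-j)) (M+2) = aseq (fun i => D (i+1)) (M+2) := by
    rw [← aseq_rev (M+1) (fun i => D (i+1))]
    exact aseq_congr _ _ _ (fun i hi => by congr 1; omega)
  have hMI := aseq_main D (M+2)
  rw [hrev] at hMI
  set q := ∑ j ∈ Finset.range (M+2), (X + C (D (M+2-1-j)) + 1) with hq
  have hE := aseq_e D (M+1)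
  rw [show M+1+2 = M+2+1 from rfl] at hE
  set A := aseq D (M+2) with hA
  set s := aseq (fun i => D (i+1)) (M+2) with hs
  set t := aseq (fun i => D (i+1)) (M+1) with ht
  set Δ := aseq D (M+2+1) with hΔ
  constructor
  · exact ⟨q * A + t, by
      linear_combination A * hMI + hE + (1 - A*s - Δ*t) * h2poly⟩
  · exact ⟨q * s + t, by
      linear_combination s * hMI + hE + (1 - A*s - Δ*t) * h2poly⟩
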